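/- Let G be a graph with no induced copy of the star K_{1,s}. Then the maximum degree of G is at most tw(G)·(s−1). -/

import Mathlib

open SimpleGraph

universe u

/-- A tree-decomposition of a graph `G`. -/
structure TreeDecomp {V : Type u} (G : SimpleGraph V) : Type (u + 1) where
  ι : Type u
  T : SimpleGraph ι
  isTree : T.IsTree
  bag : ι → Set V
  mem_bag : ∀ v : V, ∃ i, v ∈ bag i
  edge_bag : ∀ ⦃u v : V⦄, G.Adj u v → ∃ i, u ∈ bag i ∧ v ∈ bag i
  bag_conn : ∀ v : V, (T.induce {i | v ∈ bag i}).Connected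

/-- `G` has treewidth at most `k`: it admits a tree-decomposition with bags of size ≤ k+1. -/
def TreewidthLE {V : Type u} (G : SimpleGraph V) (k : ℕ) : Prop :=
  ∃ d : TreeDecomp G, ∀ i, (d.bag i).ncard ≤ k + 1

/-- The treewidth of `G`. -/
noncomputable def treewidth {V : Type u} (G : SimpleGraph V) : ℕ :=
  sInf {k | TreewidthLE G k}

/-- `G` has a `c`-tree-partition of width at most `ℓ`: an `H`-partition with `tw(H) ≤ c`
in which every part has at most `ℓ` vertices. -/
def TreePartWidthLE {V : Type u} (G : SimpleGraph V) (c ℓ : ℕ) : Prop :=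
  ∃ (ι : Type u) (H : SimpleGraph ι) (P : V → ι),
    TreewidthLE H c ∧
    (∀ ⦃u v : V⦄, G.Adj u v → P u = P v ∨ H.Adj (P u) (P v)) ∧
    ∀ i : ι, {v : V | P v = i}.ncard ≤ ℓ

/-- The `c`-tree-partition-width of `G`. -/
noncomputable def tpw {V : Type u} (G : SimpleGraph V) (c : ℕ) : ℕ :=
  sInf {ℓ | TreePartWidthLE G c ℓ}

/-
Root a tree-decomposition of width `k` at a bag containing `v`, and give each vertex the depth
of the highest bag containing it. Among any set `B` of neighbours of `v`, a deepest vertex `u`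
has its highest bag containing `v` and all of `u`'s neighbours in `B` (the highest bag of a
subtree lies on every root path into it), so `u` together with those neighbours has at most `k`
elements. Greedily taking such a `u` into an independent set and deleting its closed
neighbourhood from `B` produces an independent set `I ⊆ N(v)` with `deg v ≤ k·|I|`, and
`|I| ≤ s - 1` because `G` has no induced `K_{1,s}`.
-/

namespace SimpleGraph.IsTree

variable {ι : Type*} {T : SimpleGraph ι}

lemma length_eq_dist (ht : T.IsTree) {a b : ι} {p : T.Walk a b} (hp : p.IsPath) :
    p.length = T.dist a b := by
  obtain ⟨q, hq, hlen⟩ := ht.connected.exists_path_of_dist a b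
  rw [(ht.existsUnique_path a b).unique hp hq, hlen]

lemma dist_le_of_mem_support (ht : T.IsTree) {a b z : ι} {p : T.Walk a b} (hp : p.IsPath)
    (hz : z ∈ p.support) : T.dist a z ≤ T.dist a b := by
  classical
  exact (dist_le _).trans <| (p.length_takeUntil_le_length hz).trans (ht.length_eq_dist hp).le

lemma eq_of_mem_support_of_dist_eq (ht : T.IsTree) {a b z z' : ι} {p : T.Walk a b}
    (hp : p.IsPath) (hz : z ∈ p.support) (hz' : z' ∈ p.support)
    (hd : T.dist a z = T.dist a z') : z = z' := by
  classical
  have hpos : ∀ y (hy : y ∈ p.support), p.getVert (T.dist a y) = y := fun y hy => by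
    rw [← ht.length_eq_dist (hp.takeUntil hy), p.getVert_length_takeUntil hy]
  rw [← hpos z hz, ← hpos z' hz', hd]

lemma mem_support_dropUntil_of_dist_le (ht : T.IsTree) [DecidableEq ι] {a b z z' : ι}
    {p : T.Walk a b} (hp : p.IsPath) (hz : z ∈ p.support) (hz' : z' ∈ p.support)
    (hd : T.dist a z ≤ T.dist a z') : z' ∈ (p.dropUntil z hz).support := by
  have hsplit : z' ∈ (p.takeUntil z hz).support ∨ z' ∈ (p.dropUntil z hz).support := by
    rw [← Walk.mem_support_append_iff, p.take_spec hz]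
    exact hz'
  rcases hsplit with hbefore | hafter
  · have hpre := hp.takeUntil hz
    rw [ht.eq_of_mem_support_of_dist_eq hpre hbefore (p.takeUntil z hz).end_mem_support
      (le_antisymm (ht.dist_le_of_mem_support hpre hbefore) hd)]
    exact Walk.start_mem_support _
  · exact hafter

lemma support_subset_of_connected_induce (ht : T.IsTree) {S : Set ι}
    (hS : (T.induce S).Connected) {a b : ι} (ha : a ∈ S) (hb : b ∈ S) {p : T.Walk a b}
    (hp : p.IsPath) :
    ∀ z ∈ p.support, z ∈ S := by
  classical
  obtain ⟨w⟩ := hS ⟨a, ha⟩ ⟨b, hb⟩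
  have hwS : ∀ z ∈ (w.map (Embedding.induce S).toHom).support, z ∈ S := by
    simp only [Walk.support_map, List.mem_map]
    rintro _ ⟨z, -, rfl⟩
    exact z.2
  intro z hz
  rw [(ht.existsUnique_path a b).unique hp (Walk.bypass_isPath _)] at hz
  exact hwS z (Walk.support_bypass_subset_support _ hz)

lemma mem_support_of_forall_dist_le (ht : T.IsTree) {S : Set ι}
    (hS : (T.induce S).Connected) {r c j : ι} (hc : c ∈ S)
    (hmin : ∀ i ∈ S, T.dist r c ≤ T.dist r i) (hj : j ∈ S) {p : T.Walk r j} (hp : p.IsPath) :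
    c ∈ p.support := by
  classical
  obtain ⟨p₁, hp₁, -⟩ := ht.existsUnique_path r c
  obtain ⟨q, hq, -⟩ := ht.existsUnique_path c j
  have hqS := ht.support_subset_of_connected_induce hS hc hj hq
  have happ : (p₁.append q).IsPath := by
    rw [Walk.isPath_def, Walk.support_append, List.nodup_append]
    refine ⟨hp₁.support_nodup, hq.support_nodup.tail, ?_⟩
    rintro z hz₁ _ hz₂ rfl
    have hzc : z = c := ht.eq_of_mem_support_of_dist_eq hp₁ hz₁ p₁.end_mem_support
      (le_antisymm (ht.dist_le_of_mem_support hp₁ hz₁)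
        (hmin z (hqS z (List.mem_of_mem_tail hz₂))))
    have hnodup := hq.support_nodup
    rw [← q.cons_tail_support, List.nodup_cons] at hnodup
    exact hnodup.1 (hzc ▸ hz₂)
  rw [(ht.existsUnique_path r j).unique hp happ, Walk.mem_support_append_iff]
  exact Or.inl p₁.end_mem_support

end SimpleGraph.IsTree

theorem SimpleGraph.exists_isIndepSet_card_le_mul {V : Type*} [DecidableEq V] (G : SimpleGraph V)
    [DecidableRel G.Adj] (k : ℕ) (A : Finset V)
    (h : ∀ B ⊆ A, B.Nonempty → ∃ u ∈ B, (insert u {w ∈ B | G.Adj u w}).card ≤ k) :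
    ∃ I ⊆ A, G.IsIndepSet I ∧ A.card ≤ k * I.card := by
  induction A using Finset.strongInduction with
  | H A ih =>
  rcases A.eq_empty_or_nonempty with rfl | hne
  · exact ⟨∅, subset_rfl, by simp, by simp⟩
  obtain ⟨u, hu, hk⟩ := h A subset_rfl hne
  set N := insert u {w ∈ A | G.Adj u w}
  have hNA : N ⊆ A := Finset.insert_subset hu (Finset.filter_subset _ _)
  obtain ⟨I, hIA, hI, hcard⟩ :=
    ih (A \ N) (Finset.sdiff_ssubset hNA ⟨u, Finset.mem_insert_self _ _⟩)
      fun B hB => h B (hB.trans Finset.sdiff_subset)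
  have huI : ∀ w ∈ I, w ∉ N := fun w hw => (Finset.mem_sdiff.mp (hIA hw)).2
  refine ⟨insert u I, Finset.insert_subset hu (hIA.trans Finset.sdiff_subset), ?_, ?_⟩
  · have hnadj : ∀ w ∈ I, ¬G.Adj u w := fun w hw huw => huI w hw <|
      Finset.mem_insert_of_mem (Finset.mem_filter.mpr ⟨Finset.sdiff_subset (hIA hw), huw⟩)
    rw [Finset.coe_insert, isIndepSet_iff, Set.pairwise_insert]
    exact ⟨hI, fun w hw _ => ⟨hnadj w hw, fun hwu => hnadj w hw hwu.symm⟩⟩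
  · rw [Finset.card_insert_of_notMem fun hu' => huI u hu' (Finset.mem_insert_self _ _)]
    calc A.card ≤ (A \ N).card + N.card := Finset.card_le_card_sdiff_add_card
      _ ≤ k * (I.card + 1) := by rw [mul_add_one]; omega

namespace TreeDecomp

variable {V : Type u} {G : SimpleGraph V} (d : TreeDecomp G)

noncomputable def depth (r : d.ι) (v : V) : ℕ :=
  sInf (d.T.dist r '' {i | v ∈ d.bag i})

lemma depth_le (r : d.ι) {v : V} {i : d.ι} (hv : v ∈ d.bag i) : d.depth r v ≤ d.T.dist r i :=
  Nat.sInf_le ⟨i, hv, rfl⟩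

lemma exists_mem_bag_dist_eq_depth (r : d.ι) (v : V) :
    ∃ i, v ∈ d.bag i ∧ d.T.dist r i = d.depth r v := by
  obtain ⟨i, hi⟩ := d.mem_bag v
  exact Nat.sInf_mem (Set.Nonempty.image _ ⟨i, hi⟩)

lemma mem_bag_of_depth_le {r i j : d.ι} {u x : V} (hi : u ∈ d.bag i)
    (hiu : d.T.dist r i = d.depth r u) (huj : u ∈ d.bag j) (hxj : x ∈ d.bag j)
    (hxu : d.depth r x ≤ d.depth r u) : x ∈ d.bag i := by
  classical
  obtain ⟨i', hi', hi'x⟩ := d.exists_mem_bag_dist_eq_depth r x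
  obtain ⟨p, hp, -⟩ := d.isTree.existsUnique_path r j
  have gate : ∀ {y : V} {l : d.ι}, y ∈ d.bag l → d.T.dist r l = d.depth r y → y ∈ d.bag j →
      l ∈ p.support := fun hl hly hyj =>
    d.isTree.mem_support_of_forall_dist_le (d.bag_conn _) hl
      (fun m hm => hly ▸ d.depth_le r hm) hyj hp
  have hi'p := gate hi' hi'x hxj
  exact d.isTree.support_subset_of_connected_induce (d.bag_conn x) hi' hxj (hp.dropUntil hi'p) i
    (d.isTree.mem_support_dropUntil_of_dist_le hp hi'p (gate hi hiu huj) (by omega))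

lemma exists_mem_bag_forall_adj_mem_bag {v : V} (B : Finset V) (hB : ∀ u ∈ B, G.Adj v u)
    (hne : B.Nonempty) :
    ∃ u ∈ B, ∃ i, v ∈ d.bag i ∧ u ∈ d.bag i ∧ ∀ w ∈ B, G.Adj u w → w ∈ d.bag i := by
  obtain ⟨r, hr⟩ := d.mem_bag v
  obtain ⟨u, hu, hmax⟩ := B.exists_max_image (d.depth r) hne
  obtain ⟨i, hi, hiu⟩ := d.exists_mem_bag_dist_eq_depth r u
  refine ⟨u, hu, i, ?_, hi, fun w hw huw => ?_⟩
  · obtain ⟨j, hvj, huj⟩ := d.edge_bag (hB u hu)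
    have hv : d.depth r v = 0 := Nat.le_zero.mp (by simpa using d.depth_le r hr)
    exact d.mem_bag_of_depth_le hi hiu huj hvj (by omega)
  · obtain ⟨j, huj, hwj⟩ := d.edge_bag huw
    exact d.mem_bag_of_depth_le hi hiu huj hwj (hmax w hw)

lemma exists_card_insert_filter_adj_le [Finite V] [DecidableEq V] [DecidableRel G.Adj] {k : ℕ}
    (hd : ∀ i, (d.bag i).ncard ≤ k + 1) {v : V} (B : Finset V) (hB : ∀ u ∈ B, G.Adj v u)
    (hne : B.Nonempty) : ∃ u ∈ B, (insert u {w ∈ B | G.Adj u w}).card ≤ k := by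
  obtain ⟨u, hu, i, hvi, hui, hnbr⟩ := d.exists_mem_bag_forall_adj_mem_bag B hB hne
  refine ⟨u, hu, ?_⟩
  have hv : v ∉ insert u {w ∈ B | G.Adj u w} := by
    simp only [Finset.mem_insert, Finset.mem_filter]
    rintro (rfl | ⟨hvB, -⟩)
    · exact G.irrefl (hB _ hu)
    · exact G.irrefl (hB v hvB)
  have hsub : (↑(insert v (insert u {w ∈ B | G.Adj u w})) : Set V) ⊆ d.bag i := by
    simp only [Finset.coe_insert, Finset.coe_filter, Set.insert_subset_iff]
    exact ⟨hvi, hui, fun w ⟨hwB, huw⟩ => hnbr w hwB huw⟩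
  have := (Set.ncard_coe_finset _ ▸ Set.ncard_le_ncard hsub (Set.toFinite _)).trans (hd i)
  rw [Finset.card_insert_of_notMem hv] at this
  omega

end TreeDecomp

lemma treewidthLE_natCard {V : Type u} [Finite V] (G : SimpleGraph V) :
    TreewidthLE G (Nat.card V) := by
  refine ⟨⟨PUnit, ⊥, .of_subsingleton, fun _ => Set.univ, fun _ => ⟨⟨⟩, trivial⟩,
    fun _ _ _ => ⟨⟨⟩, trivial, trivial⟩, fun _ => ?_⟩, fun _ => ?_⟩
  · exact @Connected.of_subsingleton _ _ ⟨⟨⟨⟩, trivial⟩⟩ _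
  · rw [Set.ncard_univ]
    omega

lemma treewidthLE_treewidth {V : Type u} [Finite V] (G : SimpleGraph V) :
    TreewidthLE G (treewidth G) :=
  Nat.sInf_mem (s := {k | TreewidthLE G k}) ⟨_, treewidthLE_natCard G⟩

/-- If `G` contains no induced star `K_{1,s}` (no vertex has `s` pairwise non-adjacent
neighbours), then the maximum degree of `G` is at most `tw(G)·(s−1)`. -/
theorem stmt_14 {V : Type} [Fintype V] (G : SimpleGraph V) [DecidableRel G.Adj] (s : ℕ)
    (hfree : ∀ (v : V) (A : Finset V), (∀ a ∈ A, G.Adj v a) →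
      (∀ a ∈ A, ∀ b ∈ A, a ≠ b → ¬ G.Adj a b) → A.card < s) :
    G.maxDegree ≤ treewidth G * (s - 1) := by
  classical
  obtain ⟨d, hd⟩ := treewidthLE_treewidth G
  refine G.maxDegree_le_of_forall_degree_le _ fun v => ?_
  have hnbr : ∀ u ∈ G.neighborFinset v, G.Adj v u := fun u => (G.mem_neighborFinset v u).mp
  obtain ⟨I, hIN, hI, hcard⟩ := G.exists_isIndepSet_card_le_mul (treewidth G) _
    fun B hB hne => d.exists_card_insert_filter_adj_le hd B (fun u hu => hnbr u (hB hu)) hne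
  have hIs : I.card < s := hfree v I (fun a ha => hnbr a (hIN ha)) fun a ha b hb => hI ha hb
  calc G.degree v = (G.neighborFinset v).card := (G.card_neighborFinset_eq_degree v).symm
    _ ≤ treewidth G * I.card := hcard
    _ ≤ treewidth G * (s - 1) := Nat.mul_le_mul_left _ (by omega)
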